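/- Let G be a finite simple graph with vertex set V, let k be a positive integer, let T ⊆ V satisfy |Γ_T(Z)| ≥ k − 1 for every Steiner T-cut Z, and fix r ∈ T. Let D be the family of demand cuts, i.e., Steiner (T,r)-cuts X with |Γ_T(X)| = k − 1, and let M be the family of min-cores. For any M' ⊆ M, the family C' := ⋃_{Z ∈ M'} C(Z) is uncrossable if and only if there are no X, Y ∈ C' with X ∩ T ⊆ Γ(Y). -/

import Mathlib

/-- `nbr G X` is Γ(X): the set of vertices outside `X` adjacent to a vertex of `X`. -/
def nbr {V : Type*} [Fintype V] [DecidableEq V] (G : SimpleGraph V) [DecidableRel G.Adj]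
    (X : Finset V) : Finset V :=
  Finset.univ.filter (fun v => v ∉ X ∧ ∃ u ∈ X, G.Adj u v)

/-- `cl G X` is X⁺ = X ∪ Γ(X). -/
def cl {V : Type*} [Fintype V] [DecidableEq V] (G : SimpleGraph V) [DecidableRel G.Adj]
    (X : Finset V) : Finset V :=
  X ∪ nbr G X

/-- A demand cut: a Steiner (T,r)-cut X with |Γ_T(X)| = k - 1. -/
def IsDemand {V : Type*} [Fintype V] [DecidableEq V] (G : SimpleGraph V) [DecidableRel G.Adj]
    (T : Finset V) (k : ℕ) (r : V) (X : Finset V) : Prop :=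
  (X ∩ T).Nonempty ∧ (T \ cl G X).Nonempty ∧ r ∉ cl G X ∧ (nbr G X ∩ T).card = k - 1

/-- A min-core: a minimal demand cut. -/
def IsMinCore {V : Type*} [Fintype V] [DecidableEq V] (G : SimpleGraph V) [DecidableRel G.Adj]
    (T : Finset V) (k : ℕ) (r : V) (X : Finset V) : Prop :=
  IsDemand G T k r X ∧ ∀ Y : Finset V, IsDemand G T k r Y → Y ⊆ X → Y = X

/-- A core: a demand cut containing exactly one min-core as a subset. -/
def IsCore {V : Type*} [Fintype V] [DecidableEq V] (G : SimpleGraph V) [DecidableRel G.Adj]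
    (T : Finset V) (k : ℕ) (r : V) (X : Finset V) : Prop :=
  IsDemand G T k r X ∧ ∃! Z : Finset V, IsMinCore G T k r Z ∧ Z ⊆ X

/-- The core family C(Z) of a min-core Z: the cores containing Z. -/
def coreFam {V : Type*} [Fintype V] [DecidableEq V] (G : SimpleGraph V) [DecidableRel G.Adj]
    (T : Finset V) (k : ℕ) (r : V) (Z : Finset V) : Set (Finset V) :=
  {X | IsCore G T k r X ∧ Z ⊆ X}

/-- A family F of subsets of V is uncrossable with respect to T. -/
def Uncrossable {V : Type*} [Fintype V] [DecidableEq V] (G : SimpleGraph V)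
    [DecidableRel G.Adj] (T : Finset V) (F : Set (Finset V)) : Prop :=
  (∀ X ∈ F, ∀ Y ∈ F, (X ∩ Y ∈ F ∧ X ∪ Y ∈ F) ∨ (X \ cl G Y ∈ F ∧ Y \ cl G X ∈ F)) ∧
  (∀ X ∈ F, ∀ Y ∈ F, (X ∩ Y ∩ T).Nonempty → X ∩ Y ∈ F ∧ X ∪ Y ∈ F)

/-!
`|Γ_T|` is submodular and posimodular, and by the connectivity hypothesis no Steiner
`(T, r)`-cut has fewer than `k - 1` terminal neighbours. Hence two demand cuts meeting in a
terminal have demand-cut intersection and union, and two demand cuts whose differences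
`X \ Y⁺`, `Y \ X⁺` both contain terminals have demand-cut differences. The condition
`X ∩ T ⊆ Γ(Y)` says exactly that neither `X ∩ Y` nor `X \ Y⁺` contains a terminal, so it is what
blocks both alternatives of uncrossability; conversely, when no pair satisfies it, the resulting
demand cuts stay in the family because a demand cut inside a core contains the same min-core.
-/

open Finset

lemma card_inter_add_card_inter_le {α : Type*} [DecidableEq α] {P Q R S : Finset α}
    (T : Finset α) (hunion : P ∪ Q ⊆ R ∪ S) (hinter : P ∩ Q ⊆ R ∩ S) :
    #(P ∩ T) + #(Q ∩ T) ≤ #(R ∩ T) + #(S ∩ T) := by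
  rw [← card_inter_add_card_union, ← card_inter_add_card_union (R ∩ T),
    ← inter_inter_distrib_right, ← inter_inter_distrib_right, ← union_inter_distrib_right,
    ← union_inter_distrib_right]
  gcongr

section Neighbourhood

variable {V : Type*} [Fintype V] [DecidableEq V] {G : SimpleGraph V} [DecidableRel G.Adj]
  {X Y : Finset V}

lemma mem_nbr {v : V} : v ∈ nbr G X ↔ v ∉ X ∧ ∃ u ∈ X, G.Adj u v := by
  simp [nbr]

lemma mem_cl {v : V} : v ∈ cl G X ↔ v ∈ X ∨ ∃ u ∈ X, G.Adj u v := by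
  simp only [cl, mem_union, mem_nbr]
  tauto

lemma cl_mono (h : X ⊆ Y) : cl G X ⊆ cl G Y := by
  intro v
  simp only [mem_cl]
  rintro (hv | ⟨u, hu, huv⟩)
  exacts [.inl (h hv), .inr ⟨u, h hu, huv⟩]

lemma cl_union : cl G (X ∪ Y) = cl G X ∪ cl G Y := by
  ext v
  simp only [mem_union, mem_cl]
  grind

lemma nbr_inter_union_nbr_union_subset :
    nbr G (X ∩ Y) ∪ nbr G (X ∪ Y) ⊆ nbr G X ∪ nbr G Y := by
  intro v
  simp only [mem_union, mem_inter, mem_nbr]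
  grind

lemma nbr_inter_inter_nbr_union_subset :
    nbr G (X ∩ Y) ∩ nbr G (X ∪ Y) ⊆ nbr G X ∩ nbr G Y := by
  intro v
  simp only [mem_union, mem_inter, mem_nbr]
  grind

lemma nbr_sdiff_cl_union_subset :
    nbr G (X \ cl G Y) ∪ nbr G (Y \ cl G X) ⊆ nbr G X ∪ nbr G Y := by
  intro v
  simp only [mem_union, mem_sdiff, mem_nbr, mem_cl]
  grind [SimpleGraph.Adj.symm]

lemma nbr_sdiff_cl_inter_subset :
    nbr G (X \ cl G Y) ∩ nbr G (Y \ cl G X) ⊆ nbr G X ∩ nbr G Y := by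
  intro v
  simp only [mem_inter, mem_sdiff, mem_nbr, mem_cl]
  grind [SimpleGraph.Adj.symm]

lemma inter_subset_nbr_iff {T : Finset V} :
    X ∩ T ⊆ nbr G Y ↔ ¬ (X ∩ Y ∩ T).Nonempty ∧ ¬ ((X \ cl G Y) ∩ T).Nonempty := by
  simp only [not_nonempty_iff_eq_empty, eq_empty_iff_forall_notMem, subset_iff, mem_inter,
    mem_sdiff, mem_nbr, mem_cl]
  grind

end Neighbourhood

section Demand

variable {V : Type*} [Fintype V] [DecidableEq V] {G : SimpleGraph V} [DecidableRel G.Adj]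
  {T : Finset V} {k : ℕ} {r : V} {X Y : Finset V}

def HasLargeSteinerCuts (G : SimpleGraph V) [DecidableRel G.Adj] (T : Finset V) (k : ℕ) :
    Prop :=
  ∀ Z : Finset V, (Z ∩ T).Nonempty → (T \ cl G Z).Nonempty → k - 1 ≤ #(nbr G Z ∩ T)

lemma isDemand_and_isDemand_of_card_add_le (hT : HasLargeSteinerCuts G T k) (hr : r ∈ T)
    {A B : Finset V} (hA : (A ∩ T).Nonempty) (hB : (B ∩ T).Nonempty)
    (hrA : r ∉ cl G A) (hrB : r ∉ cl G B)
    (hAB : #(nbr G A ∩ T) + #(nbr G B ∩ T) ≤ (k - 1) + (k - 1)) :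
    IsDemand G T k r A ∧ IsDemand G T k r B := by
  have hTA : (T \ cl G A).Nonempty := ⟨r, mem_sdiff.2 ⟨hr, hrA⟩⟩
  have hTB : (T \ cl G B).Nonempty := ⟨r, mem_sdiff.2 ⟨hr, hrB⟩⟩
  have := hT A hA hTA
  have := hT B hB hTB
  exact ⟨⟨hA, hTA, hrA, by omega⟩, ⟨hB, hTB, hrB, by omega⟩⟩

lemma IsDemand.inter_union (hT : HasLargeSteinerCuts G T k) (hr : r ∈ T)
    (hX : IsDemand G T k r X) (hY : IsDemand G T k r Y) (hXY : (X ∩ Y ∩ T).Nonempty) :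
    IsDemand G T k r (X ∩ Y) ∧ IsDemand G T k r (X ∪ Y) := by
  refine isDemand_and_isDemand_of_card_add_le hT hr hXY
    (hX.1.mono (inter_subset_inter_right subset_union_left))
    (fun h ↦ hX.2.2.1 (cl_mono inter_subset_left h))
    (fun h ↦ by rw [cl_union, mem_union] at h; exact h.elim hX.2.2.1 hY.2.2.1) ?_
  exact (card_inter_add_card_inter_le T nbr_inter_union_nbr_union_subset
    nbr_inter_inter_nbr_union_subset).trans_eq (by rw [hX.2.2.2, hY.2.2.2])

lemma IsDemand.sdiff_cl (hT : HasLargeSteinerCuts G T k) (hr : r ∈ T)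
    (hX : IsDemand G T k r X) (hY : IsDemand G T k r Y)
    (hXY : ((X \ cl G Y) ∩ T).Nonempty) (hYX : ((Y \ cl G X) ∩ T).Nonempty) :
    IsDemand G T k r (X \ cl G Y) ∧ IsDemand G T k r (Y \ cl G X) := by
  refine isDemand_and_isDemand_of_card_add_le hT hr hXY hYX
    (fun h ↦ hX.2.2.1 (cl_mono sdiff_subset h)) (fun h ↦ hY.2.2.1 (cl_mono sdiff_subset h)) ?_
  exact (card_inter_add_card_inter_le T nbr_sdiff_cl_union_subset
    nbr_sdiff_cl_inter_subset).trans_eq (by rw [hX.2.2.2, hY.2.2.2])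

lemma IsDemand.exists_isMinCore_subset (hX : IsDemand G T k r X) :
    ∃ Z, IsMinCore G T k r Z ∧ Z ⊆ X := by
  obtain ⟨Z, hZX, hZ, hmin⟩ := exists_minimal_le_of_wellFoundedLT _ X hX
  exact ⟨Z, ⟨hZ, fun Y hY hYZ ↦ hYZ.antisymm (hmin hY hYZ)⟩, hZX⟩

/-- Otherwise `Z ∩ X` would be a smaller demand cut. -/
lemma IsMinCore.subset_of_inter_nonempty (hT : HasLargeSteinerCuts G T k) (hr : r ∈ T)
    {Z : Finset V} (hZ : IsMinCore G T k r Z) (hX : IsDemand G T k r X)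
    (hZX : (Z ∩ X ∩ T).Nonempty) : Z ⊆ X := by
  rw [← hZ.2 _ (hZ.1.inter_union hT hr hX hZX).1 inter_subset_left]
  exact inter_subset_right

end Demand

section CoreFamily

variable {V : Type*} [Fintype V] [DecidableEq V] {G : SimpleGraph V} [DecidableRel G.Adj]
  {T : Finset V} {k : ℕ} {r : V} {M' : Set (Finset V)} {X Y : Finset V}

lemma mem_biUnion_coreFam_iff (hM' : ∀ Z ∈ M', IsMinCore G T k r Z) :
    X ∈ ⋃ Z ∈ M', coreFam G T k r Z ↔ IsDemand G T k r X ∧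
      ∃ Z ∈ M', Z ⊆ X ∧ ∀ W, IsMinCore G T k r W → W ⊆ X → W = Z := by
  simp only [Set.mem_iUnion, coreFam, Set.mem_ofPred_eq, IsCore, exists_prop]
  constructor
  · rintro ⟨Z, hZ, ⟨hX, U, -, hU⟩, hZX⟩
    have hZU := hU Z ⟨hM' Z hZ, hZX⟩
    exact ⟨hX, Z, hZ, hZX, fun W hW hWX ↦ (hU W ⟨hW, hWX⟩).trans hZU.symm⟩
  · rintro ⟨hX, Z, hZ, hZX, hmin⟩
    exact ⟨Z, hZ, ⟨hX, Z, ⟨hM' Z hZ, hZX⟩, fun W hW ↦ hmin W hW.1 hW.2⟩, hZX⟩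

lemma mem_biUnion_coreFam_of_subset (hM' : ∀ Z ∈ M', IsMinCore G T k r Z)
    (hX : X ∈ ⋃ Z ∈ M', coreFam G T k r Z) (hY : IsDemand G T k r Y) (hYX : Y ⊆ X) :
    Y ∈ ⋃ Z ∈ M', coreFam G T k r Z := by
  obtain ⟨-, Z, hZ, -, hmin⟩ := (mem_biUnion_coreFam_iff hM').1 hX
  obtain ⟨U, hU, hUY⟩ := hY.exists_isMinCore_subset
  refine (mem_biUnion_coreFam_iff hM').2 ⟨hY, Z, hZ, ?_, fun W hW hWY ↦ hmin W hW (hWY.trans hYX)⟩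
  exact hmin U hU (hUY.trans hYX) ▸ hUY

/-- Two members of the family meeting in a terminal contain the same min-core, namely the one
inside their intersection; every min-core inside their union meets one of them in a terminal
and so lies inside it. -/
lemma inter_mem_and_union_mem_biUnion_coreFam (hT : HasLargeSteinerCuts G T k) (hr : r ∈ T)
    (hM' : ∀ Z ∈ M', IsMinCore G T k r Z)
    (hX : X ∈ ⋃ Z ∈ M', coreFam G T k r Z) (hY : Y ∈ ⋃ Z ∈ M', coreFam G T k r Z)
    (hXY : (X ∩ Y ∩ T).Nonempty) :
    X ∩ Y ∈ ⋃ Z ∈ M', coreFam G T k r Z ∧ X ∪ Y ∈ ⋃ Z ∈ M', coreFam G T k r Z := by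
  obtain ⟨hXd, Z, hZ, hZX, hminX⟩ := (mem_biUnion_coreFam_iff hM').1 hX
  obtain ⟨hYd, Z', -, -, hminY⟩ := (mem_biUnion_coreFam_iff hM').1 hY
  obtain ⟨hinter, hunion⟩ := hXd.inter_union hT hr hYd hXY
  obtain ⟨U, hU, hUXY⟩ := hinter.exists_isMinCore_subset
  have hZ' : Z' = Z :=
    (hminY U hU (hUXY.trans inter_subset_right)).symm.trans
      (hminX U hU (hUXY.trans inter_subset_left))
  refine ⟨mem_biUnion_coreFam_of_subset hM' hX hinter inter_subset_left,
    (mem_biUnion_coreFam_iff hM').2 ⟨hunion, Z, hZ, hZX.trans subset_union_left, ?_⟩⟩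
  intro W hW hWXY
  obtain ⟨t, htWT⟩ := hW.1.1
  obtain ⟨htW, htT⟩ := mem_inter.1 htWT
  rcases mem_union.1 (hWXY htW) with htX | htY
  · exact hminX W hW (hW.subset_of_inter_nonempty hT hr hXd ⟨t, by simp [*]⟩)
  · exact hZ' ▸ hminY W hW (hW.subset_of_inter_nonempty hT hr hYd ⟨t, by simp [*]⟩)

end CoreFamily

theorem stmt_11_general {V : Type*} [Fintype V] [DecidableEq V]
    (G : SimpleGraph V) [DecidableRel G.Adj] (k : ℕ)
    (T : Finset V)
    -- |Γ_T(Z)| ≥ k-1 for every Steiner T-cut Z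
    (hTconn : ∀ Z : Finset V, (Z ∩ T).Nonempty → (T \ cl G Z).Nonempty →
      k - 1 ≤ (nbr G Z ∩ T).card)
    (r : V) (hr : r ∈ T)
    (M' : Set (Finset V)) (hM' : ∀ Z ∈ M', IsMinCore G T k r Z) :
    Uncrossable G T (⋃ Z ∈ M', coreFam G T k r Z) ↔
      ¬ ∃ X ∈ ⋃ Z ∈ M', coreFam G T k r Z, ∃ Y ∈ ⋃ Z ∈ M', coreFam G T k r Z,
        X ∩ T ⊆ nbr G Y := by
  set C := ⋃ Z ∈ M', coreFam G T k r Z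
  have hmeetsT {X : Finset V} (hX : X ∈ C) : (X ∩ T).Nonempty :=
    ((mem_biUnion_coreFam_iff hM').1 hX).1.1
  have hcross {X Y : Finset V} (hX : X ∈ C) (hY : Y ∈ C) (hXY : (X ∩ Y ∩ T).Nonempty) :=
    inter_mem_and_union_mem_biUnion_coreFam hTconn hr hM' hX hY hXY
  constructor
  · rintro ⟨huncross, -⟩ ⟨X, hX, Y, hY, hXY⟩
    rw [inter_subset_nbr_iff] at hXY
    rcases huncross X hX Y hY with ⟨hXY', -⟩ | ⟨hXY', -⟩
    exacts [hXY.1 (hmeetsT hXY'), hXY.2 (hmeetsT hXY')]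
  · intro hno
    refine ⟨fun X hX Y hY ↦ ?_, fun X hX Y hY ↦ hcross hX hY⟩
    by_cases hXY : (X ∩ Y ∩ T).Nonempty
    · exact .inl (hcross hX hY hXY)
    have hsdiff {A B : Finset V} (hA : A ∈ C) (hB : B ∈ C) (hAB : ¬(A ∩ B ∩ T).Nonempty) :
        ((A \ cl G B) ∩ T).Nonempty :=
      by_contra fun h ↦ hno ⟨A, hA, B, hB, inter_subset_nbr_iff.2 ⟨hAB, h⟩⟩
    have hXd := ((mem_biUnion_coreFam_iff hM').1 hX).1
    have hYd := ((mem_biUnion_coreFam_iff hM').1 hY).1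
    obtain ⟨hXY', hYX'⟩ := hXd.sdiff_cl hTconn hr hYd (hsdiff hX hY hXY)
      (hsdiff hY hX (by rwa [inter_comm Y X]))
    exact .inr ⟨mem_biUnion_coreFam_of_subset hM' hX hXY' sdiff_subset,
      mem_biUnion_coreFam_of_subset hM' hY hYX' sdiff_subset⟩

theorem stmt_11 {V : Type*} [Fintype V] [DecidableEq V]
    (G : SimpleGraph V) [DecidableRel G.Adj] (k : ℕ) (hk : 1 ≤ k)
    (T : Finset V)
    -- |Γ_T(Z)| ≥ k-1 for every Steiner T-cut Z
    (hTconn : ∀ Z : Finset V, (Z ∩ T).Nonempty → (T \ cl G Z).Nonempty →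
      k - 1 ≤ (nbr G Z ∩ T).card)
    (r : V) (hr : r ∈ T)
    (M' : Set (Finset V)) (hM' : ∀ Z ∈ M', IsMinCore G T k r Z) :
    Uncrossable G T (⋃ Z ∈ M', coreFam G T k r Z) ↔
      ¬ ∃ X ∈ ⋃ Z ∈ M', coreFam G T k r Z, ∃ Y ∈ ⋃ Z ∈ M', coreFam G T k r Z,
        X ∩ T ⊆ nbr G Y :=
  stmt_11_general G k T hTconn r hr M' hM'
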